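/- arXiv:2010.08863 — 2 statements merged into one kernel-verified Lean document; each statement's English description precedes it below -/
import Mathlib

section
/- Each of the 30 Klein lines contains exactly 6 points of the Klein configuration Z_60. -/
noncomputable section
open Complex

/-- Points of `ℙ³(ℂ)` are represented by vectors in `ℂ⁴`; coordinates `x = v 0`,
`y = v 1`, `z = v 2`, `w = v 3`. -/
abbrev V4 := Fin 4 → ℂ

/-- The pairs of linear forms cutting out the 30 Klein lines `ℓ_1, …, ℓ_30`
(indexed here by `0, …, 29`). -/
def lineEqs : Fin 30 → ((V4 → ℂ) × (V4 → ℂ)) :=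
  ![⟨fun v => v 0, fun v => v 1⟩,
    ⟨fun v => v 2 - v 3, fun v => v 0 - v 1⟩,
    ⟨fun v => v 2 - v 3, fun v => v 0 + v 1⟩,
    ⟨fun v => v 2 + I * v 3, fun v => v 0 + I * v 1⟩,
    ⟨fun v => v 2 + I * v 3, fun v => v 0 - I * v 1⟩,
    ⟨fun v => v 2 + v 3, fun v => v 0 - v 1⟩,
    ⟨fun v => v 2 + v 3, fun v => v 0 + v 1⟩,
    ⟨fun v => v 2 - I * v 3, fun v => v 0 + I * v 1⟩,
    ⟨fun v => v 2 - I * v 3, fun v => v 0 - I * v 1⟩,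
    ⟨fun v => v 2, fun v => v 0⟩,
    ⟨fun v => v 1 - v 3, fun v => v 0 - v 2⟩,
    ⟨fun v => v 1 - v 3, fun v => v 0 + v 2⟩,
    ⟨fun v => v 1 + I * v 3, fun v => v 0 + I * v 2⟩,
    ⟨fun v => v 1 + I * v 3, fun v => v 0 - I * v 2⟩,
    ⟨fun v => v 1 + v 3, fun v => v 0 - v 2⟩,
    ⟨fun v => v 1 + v 3, fun v => v 0 + v 2⟩,
    ⟨fun v => v 1 - I * v 3, fun v => v 0 + I * v 2⟩,
    ⟨fun v => v 1 - I * v 3, fun v => v 0 - I * v 2⟩,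
    ⟨fun v => v 3, fun v => v 0⟩,
    ⟨fun v => v 1 - v 2, fun v => v 0 - v 3⟩,
    ⟨fun v => v 1 - v 2, fun v => v 0 + v 3⟩,
    ⟨fun v => v 1 + I * v 2, fun v => v 0 + I * v 3⟩,
    ⟨fun v => v 1 + I * v 2, fun v => v 0 - I * v 3⟩,
    ⟨fun v => v 1 + v 2, fun v => v 0 - v 3⟩,
    ⟨fun v => v 1 + v 2, fun v => v 0 + v 3⟩,
    ⟨fun v => v 1 - I * v 2, fun v => v 0 + I * v 3⟩,
    ⟨fun v => v 1 - I * v 2, fun v => v 0 - I * v 3⟩,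
    ⟨fun v => v 2, fun v => v 1⟩,
    ⟨fun v => v 3, fun v => v 1⟩,
    ⟨fun v => v 3, fun v => v 2⟩]

/-- The 30 Klein lines, as sets of vector representatives (the zero vector is
harmlessly included; it represents no projective point). -/
def kleinLine (j : Fin 30) : Set V4 :=
  {v | (lineEqs j).1 v = 0 ∧ (lineEqs j).2 v = 0}
/-- Fixed representatives of the 60 points `P_1, …, P_60` of the Klein
configuration `Z_60` (indexed here by `0, …, 59`). -/
def kleinPoint : Fin 60 → V4 :=
  ![![0,0,1,1], ![0,0,1,I], ![0,0,1,-1], ![0,0,1,-I],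
    ![0,1,0,1], ![0,1,0,I], ![0,1,0,-1], ![0,1,0,-I],
    ![0,1,1,0], ![0,1,I,0], ![0,1,-1,0], ![0,1,-I,0],
    ![1,0,0,1], ![1,0,0,I], ![1,0,0,-1], ![1,0,0,-I],
    ![1,0,1,0], ![1,0,I,0], ![1,0,-1,0], ![1,0,-I,0],
    ![1,1,0,0], ![1,I,0,0], ![1,-1,0,0], ![1,-I,0,0],
    ![1,0,0,0], ![0,1,0,0], ![0,0,1,0], ![0,0,0,1],
    ![1,1,1,1], ![1,1,1,-1], ![1,1,-1,1], ![1,1,-1,-1],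
    ![1,-1,1,1], ![1,-1,1,-1], ![1,-1,-1,1], ![1,-1,-1,-1],
    ![1,1,I,I], ![1,1,I,-I], ![1,1,-I,I], ![1,1,-I,-I],
    ![1,-1,I,I], ![1,-1,I,-I], ![1,-1,-I,I], ![1,-1,-I,-I],
    ![1,I,1,I], ![1,I,1,-I], ![1,-I,1,I], ![1,-I,1,-I],
    ![1,I,-1,I], ![1,I,-1,-I], ![1,-I,-1,I], ![1,-I,-1,-I],
    ![1,I,I,1], ![1,I,-I,1], ![1,-I,I,1], ![1,-I,-I,1],
    ![1,I,I,-1], ![1,I,-I,-1], ![1,-I,I,-1], ![1,-I,-I,-1]]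

namespace KleinAux

def Iz : GaussianInt := ⟨0, 1⟩

def pZ : Fin 60 → Fin 4 → GaussianInt :=
  ![![0,0,1,1], ![0,0,1,Iz], ![0,0,1,-1], ![0,0,1,-Iz],
    ![0,1,0,1], ![0,1,0,Iz], ![0,1,0,-1], ![0,1,0,-Iz],
    ![0,1,1,0], ![0,1,Iz,0], ![0,1,-1,0], ![0,1,-Iz,0],
    ![1,0,0,1], ![1,0,0,Iz], ![1,0,0,-1], ![1,0,0,-Iz],
    ![1,0,1,0], ![1,0,Iz,0], ![1,0,-1,0], ![1,0,-Iz,0],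
    ![1,1,0,0], ![1,Iz,0,0], ![1,-1,0,0], ![1,-Iz,0,0],
    ![1,0,0,0], ![0,1,0,0], ![0,0,1,0], ![0,0,0,1],
    ![1,1,1,1], ![1,1,1,-1], ![1,1,-1,1], ![1,1,-1,-1],
    ![1,-1,1,1], ![1,-1,1,-1], ![1,-1,-1,1], ![1,-1,-1,-1],
    ![1,1,Iz,Iz], ![1,1,Iz,-Iz], ![1,1,-Iz,Iz], ![1,1,-Iz,-Iz],
    ![1,-1,Iz,Iz], ![1,-1,Iz,-Iz], ![1,-1,-Iz,Iz], ![1,-1,-Iz,-Iz],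
    ![1,Iz,1,Iz], ![1,Iz,1,-Iz], ![1,-Iz,1,Iz], ![1,-Iz,1,-Iz],
    ![1,Iz,-1,Iz], ![1,Iz,-1,-Iz], ![1,-Iz,-1,Iz], ![1,-Iz,-1,-Iz],
    ![1,Iz,Iz,1], ![1,Iz,-Iz,1], ![1,-Iz,Iz,1], ![1,-Iz,-Iz,1],
    ![1,Iz,Iz,-1], ![1,Iz,-Iz,-1], ![1,-Iz,Iz,-1], ![1,-Iz,-Iz,-1]]

def lZ : Fin 30 → (((Fin 4 → GaussianInt) → GaussianInt) × ((Fin 4 → GaussianInt) → GaussianInt)) :=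
  ![⟨fun v => v 0, fun v => v 1⟩,
    ⟨fun v => v 2 - v 3, fun v => v 0 - v 1⟩,
    ⟨fun v => v 2 - v 3, fun v => v 0 + v 1⟩,
    ⟨fun v => v 2 + Iz * v 3, fun v => v 0 + Iz * v 1⟩,
    ⟨fun v => v 2 + Iz * v 3, fun v => v 0 - Iz * v 1⟩,
    ⟨fun v => v 2 + v 3, fun v => v 0 - v 1⟩,
    ⟨fun v => v 2 + v 3, fun v => v 0 + v 1⟩,
    ⟨fun v => v 2 - Iz * v 3, fun v => v 0 + Iz * v 1⟩,
    ⟨fun v => v 2 - Iz * v 3, fun v => v 0 - Iz * v 1⟩,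
    ⟨fun v => v 2, fun v => v 0⟩,
    ⟨fun v => v 1 - v 3, fun v => v 0 - v 2⟩,
    ⟨fun v => v 1 - v 3, fun v => v 0 + v 2⟩,
    ⟨fun v => v 1 + Iz * v 3, fun v => v 0 + Iz * v 2⟩,
    ⟨fun v => v 1 + Iz * v 3, fun v => v 0 - Iz * v 2⟩,
    ⟨fun v => v 1 + v 3, fun v => v 0 - v 2⟩,
    ⟨fun v => v 1 + v 3, fun v => v 0 + v 2⟩,
    ⟨fun v => v 1 - Iz * v 3, fun v => v 0 + Iz * v 2⟩,
    ⟨fun v => v 1 - Iz * v 3, fun v => v 0 - Iz * v 2⟩,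
    ⟨fun v => v 3, fun v => v 0⟩,
    ⟨fun v => v 1 - v 2, fun v => v 0 - v 3⟩,
    ⟨fun v => v 1 - v 2, fun v => v 0 + v 3⟩,
    ⟨fun v => v 1 + Iz * v 2, fun v => v 0 + Iz * v 3⟩,
    ⟨fun v => v 1 + Iz * v 2, fun v => v 0 - Iz * v 3⟩,
    ⟨fun v => v 1 + v 2, fun v => v 0 - v 3⟩,
    ⟨fun v => v 1 + v 2, fun v => v 0 + v 3⟩,
    ⟨fun v => v 1 - Iz * v 2, fun v => v 0 + Iz * v 3⟩,
    ⟨fun v => v 1 - Iz * v 2, fun v => v 0 - Iz * v 3⟩,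
    ⟨fun v => v 2, fun v => v 1⟩,
    ⟨fun v => v 3, fun v => v 1⟩,
    ⟨fun v => v 3, fun v => v 2⟩]

lemma toComplex_Iz : (GaussianInt.toComplex Iz : ℂ) = I := by
  simp [Iz, GaussianInt.toComplex_def']

lemma comp_cons {α β : Type*} (f : α → β) (a : α) {n : ℕ} (u : Fin n → α) :
    f ∘ Matrix.vecCons a u = Matrix.vecCons (f a) (f ∘ u) := by
  funext i
  induction i using Fin.cases <;> simp

lemma comp_empty {α β : Type*} (f : α → β) : f ∘ (![] : Fin 0 → α) = ![] := by
  funext i; exact i.elim0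

lemma hKP : kleinPoint = fun k => GaussianInt.toComplex ∘ pZ k := by
  show kleinPoint = (fun r => GaussianInt.toComplex ∘ r) ∘ pZ
  rw [kleinPoint, pZ]
  simp only [comp_cons, comp_empty, map_one, map_zero, map_neg, toComplex_Iz]

lemma point_eq (k : Fin 60) :
    kleinPoint k = fun i => GaussianInt.toComplex (pZ k i) := by
  rw [hKP]; rfl

lemma sh_one (w : Fin 4 → GaussianInt) (a : Fin 4) :
    (GaussianInt.toComplex (w a) = 0) ↔ (w a = 0) := GaussianInt.toComplex_eq_zero

lemma sh_sub (w : Fin 4 → GaussianInt) (a b : Fin 4) :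
    (GaussianInt.toComplex (w a) - GaussianInt.toComplex (w b) = 0) ↔ (w a - w b = 0) := by
  rw [← map_sub]; exact GaussianInt.toComplex_eq_zero

lemma sh_add (w : Fin 4 → GaussianInt) (a b : Fin 4) :
    (GaussianInt.toComplex (w a) + GaussianInt.toComplex (w b) = 0) ↔ (w a + w b = 0) := by
  rw [← map_add]; exact GaussianInt.toComplex_eq_zero

lemma sh_addI (w : Fin 4 → GaussianInt) (a b : Fin 4) :
    (GaussianInt.toComplex (w a) + I * GaussianInt.toComplex (w b) = 0) ↔
      (w a + Iz * w b = 0) := by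
  rw [← toComplex_Iz, ← map_mul, ← map_add]; exact GaussianInt.toComplex_eq_zero

lemma sh_subI (w : Fin 4 → GaussianInt) (a b : Fin 4) :
    (GaussianInt.toComplex (w a) - I * GaussianInt.toComplex (w b) = 0) ↔
      (w a - Iz * w b = 0) := by
  rw [← toComplex_Iz, ← map_mul, ← map_sub]; exact GaussianInt.toComplex_eq_zero

lemma mem_iff (j : Fin 30) (k : Fin 60) :
    kleinPoint k ∈ kleinLine j ↔ ((lZ j).1 (pZ k) = 0 ∧ (lZ j).2 (pZ k) = 0) := by
  simp only [kleinLine, Set.mem_setOf_eq, point_eq k]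
  fin_cases j <;>
    exact and_congr
      (by first
        | exact sh_one (pZ k) _ | exact sh_sub (pZ k) _ _ | exact sh_add (pZ k) _ _
        | exact sh_addI (pZ k) _ _ | exact sh_subI (pZ k) _ _)
      (by first
        | exact sh_one (pZ k) _ | exact sh_sub (pZ k) _ _ | exact sh_add (pZ k) _ _
        | exact sh_addI (pZ k) _ _ | exact sh_subI (pZ k) _ _)

end KleinAux

/-- Each of the 30 Klein lines contains exactly `6` of the 60 points
of the Klein configuration `Z_60`. (The 60 listed representatives are pairwise
projectively distinct, so counting indices counts projective points.) -/
theorem each_klein_line_contains_six_points :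
    ∀ j : Fin 30, Nat.card {k : Fin 60 // kleinPoint k ∈ kleinLine j} = 6 := by
  intro j
  rw [Nat.card_congr (Equiv.subtypeEquivRight fun k => KleinAux.mem_iff j k),
    Nat.card_eq_fintype_card]
  revert j
  decide
end
end

section
/- There is no set of 12 points in the real projective plane ℙ²(ℝ), not all collinear, such that every line through two of the points contains a third point of the set and the points realize the same incidence structure as the 12 points P_9,…,P_12, P_17,…,P_20, P_21,…,P_24 of the Klein configuration in the plane w=0; equivalently, a finite non-collinear set of points in ℙ²(ℝ) in which every connecting line contains at least three points of the set does not exist (dual Sylvester–Gallai). -/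
private def ip (x y : Fin 3 → ℝ) : ℝ := x 0 * y 0 + x 1 * y 1 + x 2 * y 2

private def Ndet (x y z : Fin 3 → ℝ) : ℝ :=
  ip (z - y) (z - y) * ip (x - y) (x - y) - (ip (z - y) (x - y)) ^ 2

private lemma ip_comm (x y : Fin 3 → ℝ) : ip x y = ip y x := by simp only [ip]; ring

private lemma ip_add_left (x y z : Fin 3 → ℝ) : ip (x + y) z = ip x z + ip y z := by
  simp only [ip, Pi.add_apply]; ring

private lemma ip_sub_left (x y z : Fin 3 → ℝ) : ip (x - y) z = ip x z - ip y z := by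
  simp only [ip, Pi.sub_apply]; ring

private lemma ip_smul_left (c : ℝ) (x y : Fin 3 → ℝ) : ip (c • x) y = c * ip x y := by
  simp only [ip, Pi.smul_apply, smul_eq_mul]; ring

private lemma ip_add_right (x y z : Fin 3 → ℝ) : ip x (y + z) = ip x y + ip x z := by
  simp only [ip, Pi.add_apply]; ring

private lemma ip_sub_right (x y z : Fin 3 → ℝ) : ip x (y - z) = ip x y - ip x z := by
  simp only [ip, Pi.sub_apply]; ring

private lemma ip_smul_right (c : ℝ) (x y : Fin 3 → ℝ) : ip x (c • y) = c * ip x y := by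
  simp only [ip, Pi.smul_apply, smul_eq_mul]; ring

private lemma ip_neg_right (x y : Fin 3 → ℝ) : ip x (-y) = - ip x y := by
  simp only [ip, Pi.neg_apply]; ring

private lemma ip_neg_left (x y : Fin 3 → ℝ) : ip (-x) y = - ip x y := by
  simp only [ip, Pi.neg_apply]; ring

private lemma ip_self_nonneg (v : Fin 3 → ℝ) : 0 ≤ ip v v := by
  simp only [ip]; nlinarith [sq_nonneg (v 0), sq_nonneg (v 1), sq_nonneg (v 2)]

private lemma eq_zero_of_ip_self {v : Fin 3 → ℝ} (h : ip v v = 0) : v = 0 := by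
  simp only [ip] at h
  have h0 : v 0 * v 0 = 0 := by nlinarith [sq_nonneg (v 1), sq_nonneg (v 2)]
  have h1 : v 1 * v 1 = 0 := by nlinarith [sq_nonneg (v 0), sq_nonneg (v 2)]
  have h2 : v 2 * v 2 = 0 := by nlinarith [sq_nonneg (v 0), sq_nonneg (v 1)]
  funext i
  fin_cases i <;>
    simp only [Pi.zero_apply] <;>
    [exact mul_self_eq_zero.mp h0; exact mul_self_eq_zero.mp h1; exact mul_self_eq_zero.mp h2]

private lemma ip_pos {v : Fin 3 → ℝ} (hv : v ≠ 0) : 0 < ip v v :=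
  lt_of_le_of_ne (ip_self_nonneg v) (fun h => hv (eq_zero_of_ip_self h.symm))

private lemma exists_smul_of_gram {u v : Fin 3 → ℝ} (hu : u ≠ 0)
    (h : ip u u * ip v v - (ip u v) ^ 2 = 0) : ∃ r : ℝ, v = r • u := by
  have hu' : 0 < ip u u := ip_pos hu
  have hne : ip u u ≠ 0 := hu'.ne'
  refine ⟨ip u v / ip u u, ?_⟩
  have h0 : ip (v - (ip u v / ip u u) • u) (v - (ip u v / ip u u) • u) = 0 := by
    simp only [ip_sub_left, ip_sub_right, ip_smul_left, ip_smul_right, ip_comm v u]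
    field_simp
    linear_combination h
  have h1 := eq_zero_of_ip_self h0
  have h2 := sub_eq_zero.mp h1
  exact h2

private lemma exists_functional :
    ∀ S : Finset (Fin 3 → ℝ), (∀ v ∈ S, v ≠ 0) → ∃ l, ∀ v ∈ S, ip l v ≠ 0 := by
  classical
  intro S
  induction S using Finset.induction_on with
  | empty => exact fun _ => ⟨0, by simp⟩
  | @insert v s hv ih =>
    intro h
    obtain ⟨l, hl⟩ := ih fun w hw => h w (Finset.mem_insert_of_mem hw)
    have hv0 : v ≠ 0 := h v (Finset.mem_insert_self _ _)
    have hvv : 0 < ip v v := ip_pos hv0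
    obtain ⟨c, hc⟩ := Infinite.exists_notMem_finset
      ((insert v s).image fun w => - ip l w / ip v w)
    refine ⟨l + c • v, ?_⟩
    intro w hw
    have hexp : ip (l + c • v) w = ip l w + c * ip v w := by
      rw [ip_add_left, ip_smul_left]
    by_cases hvw : ip v w = 0
    · have hws : w ∈ s := by
        rcases Finset.mem_insert.1 hw with rfl | h' 
        · exact absurd hvw hvv.ne'
        · exact h'
      rw [hexp, hvw]
      simpa using hl w hws
    · intro h0
      apply hc
      refine Finset.mem_image.2 ⟨w, hw, ?_⟩
      rw [hexp] at h0
      field_simp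
      linarith

private lemma two_same_side {x y z : ℝ} (hxy : x ≠ y) (hxz : x ≠ z) (hyz : y ≠ z) :
    ∃ s t : ℝ, (s = x ∨ s = y ∨ s = z) ∧ (t = x ∨ t = y ∨ t = z) ∧
      ((0 ≤ s ∧ s < t) ∨ (t < s ∧ s ≤ 0)) := by
  have key : ∀ a b : ℝ, a ≠ b → 0 ≤ a → 0 ≤ b →
      ∃ s t : ℝ, ((s = a ∨ s = b) ∧ (t = a ∨ t = b) ∧ (0 ≤ s ∧ s < t)) := by
    intro a b hab ha hb
    rcases lt_or_gt_of_ne hab with hlt | hlt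
    · exact ⟨a, b, Or.inl rfl, Or.inr rfl, ha, hlt⟩
    · exact ⟨b, a, Or.inr rfl, Or.inl rfl, hb, hlt⟩
  have key2 : ∀ a b : ℝ, a ≠ b → a ≤ 0 → b ≤ 0 →
      ∃ s t : ℝ, ((s = a ∨ s = b) ∧ (t = a ∨ t = b) ∧ (t < s ∧ s ≤ 0)) := by
    intro a b hab ha hb
    rcases lt_or_gt_of_ne hab with hlt | hlt
    · exact ⟨b, a, Or.inr rfl, Or.inl rfl, hlt, hb⟩
    · exact ⟨a, b, Or.inl rfl, Or.inr rfl, hlt, ha⟩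
  rcases le_total 0 x with hx | hx <;> rcases le_total 0 y with hy | hy <;>
    rcases le_total 0 z with hz | hz
  · obtain ⟨s, t, h1, h2, h3⟩ := key x y hxy hx hy
    exact ⟨s, t, by tauto, by tauto, Or.inl h3⟩
  · obtain ⟨s, t, h1, h2, h3⟩ := key x y hxy hx hy
    exact ⟨s, t, by tauto, by tauto, Or.inl h3⟩
  · obtain ⟨s, t, h1, h2, h3⟩ := key x z hxz hx hz
    exact ⟨s, t, by tauto, by tauto, Or.inl h3⟩
  · obtain ⟨s, t, h1, h2, h3⟩ := key2 y z hyz hy hz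
    exact ⟨s, t, by tauto, by tauto, Or.inr h3⟩
  · obtain ⟨s, t, h1, h2, h3⟩ := key y z hyz hy hz
    exact ⟨s, t, by tauto, by tauto, Or.inl h3⟩
  · obtain ⟨s, t, h1, h2, h3⟩ := key2 x z hxz hx hz
    exact ⟨s, t, by tauto, by tauto, Or.inr h3⟩
  · obtain ⟨s, t, h1, h2, h3⟩ := key2 x y hxy hx hy
    exact ⟨s, t, by tauto, by tauto, Or.inr h3⟩
  · obtain ⟨s, t, h1, h2, h3⟩ := key2 x y hxy hx hy
    exact ⟨s, t, by tauto, by tauto, Or.inr h3⟩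

private lemma kelly_core (q e u0 : Fin 3 → ℝ) (s t : ℝ)
    (hU : 0 < ip u0 u0) (hX : ip e u0 = 0) (hE : 0 < ip e e)
    (hs : 0 ≤ s) (hst : s < t) :
    Ndet (q + s • u0) (q + e) (q + t • u0) ≠ 0 ∧
    Ndet (q + s • u0) (q + e) (q + t • u0) /
      ip ((q + t • u0) - (q + e)) ((q + t • u0) - (q + e)) < ip e e := by
  have hX' : ip u0 e = 0 := by rw [ip_comm]; exact hX
  have hB : (q + t • u0) - (q + e) = t • u0 - e := by abel
  have hA : (q + s • u0) - (q + e) = s • u0 - e := by abel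
  have h1 : ip (t • u0 - e) (t • u0 - e) = t ^ 2 * ip u0 u0 + ip e e := by
    simp only [ip_sub_left, ip_sub_right, ip_smul_left, ip_smul_right, hX, hX']; ring
  have h2 : ip (s • u0 - e) (s • u0 - e) = s ^ 2 * ip u0 u0 + ip e e := by
    simp only [ip_sub_left, ip_sub_right, ip_smul_left, ip_smul_right, hX, hX']; ring
  have h3 : ip (t • u0 - e) (s • u0 - e) = t * s * ip u0 u0 + ip e e := by
    simp only [ip_sub_left, ip_sub_right, ip_smul_left, ip_smul_right, hX, hX']; ring
  have hNv : Ndet (q + s • u0) (q + e) (q + t • u0) = ip u0 u0 * ip e e * (t - s) ^ 2 := by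
    rw [Ndet, hB, hA, h1, h2, h3]; ring
  have hts : (0:ℝ) < (t - s) ^ 2 := pow_pos (by linarith) 2
  constructor
  · rw [hNv]
    exact ne_of_gt (mul_pos (mul_pos hU hE) hts)
  · rw [hNv, hB, h1, div_lt_iff₀ (by nlinarith)]
    nlinarith [mul_nonneg (mul_nonneg (mul_nonneg hE.le hU.le) hs)
      (show (0:ℝ) ≤ 2 * t - s by linarith), mul_pos hE hE]

private lemma kelly_main (p a b c : Fin 3 → ℝ) (r : ℝ)
    (hab : a ≠ b) (hc : c = a + r • (b - a)) (hr0 : r ≠ 0) (hr1 : r ≠ 1)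
    (hN : Ndet p a b ≠ 0) :
    ∃ A B : Fin 3 → ℝ, (A = a ∨ A = b ∨ A = c) ∧ (B = a ∨ B = b ∨ B = c) ∧
      Ndet A p B ≠ 0 ∧
      Ndet A p B / ip (B - p) (B - p) < Ndet p a b / ip (b - a) (b - a) := by
  have hu0 : b - a ≠ 0 := sub_ne_zero.2 (Ne.symm hab)
  have hU : 0 < ip (b - a) (b - a) := ip_pos hu0
  set κ : ℝ := ip (p - a) (b - a) / ip (b - a) (b - a) with hκ
  set q : Fin 3 → ℝ := a + κ • (b - a) with hq
  set e : Fin 3 → ℝ := p - q with he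
  have hpe : p = q + e := by rw [he]; abel
  have hXe : ip e (b - a) = 0 := by
    have hUne : ip b (b - a) - ip a (b - a) ≠ 0 := by rw [← ip_sub_left]; exact hU.ne'
    rw [he, hq, hκ]
    simp only [ip_sub_left, ip_add_left, ip_smul_left]
    field_simp
    ring
  have hpa : p - a = e + κ • (b - a) := by rw [he, hq]; abel
  have hNval : Ndet p a b = ip (b - a) (b - a) * ip e e := by
    have hXe' : ip (b - a) e = 0 := by rw [ip_comm]; exact hXe
    rw [Ndet, hpa]
    simp only [ip_add_left, ip_add_right, ip_smul_left, ip_smul_right, hXe, hXe']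
    ring
  have hE : 0 < ip e e := by
    rcases (ip_self_nonneg e).lt_or_eq with h | h
    · exact h
    · exfalso; apply hN; rw [hNval, ← h, mul_zero]
  have ha' : a = q + (-κ) • (b - a) := by
    rw [hq]; ext i
    simp only [Pi.add_apply, Pi.smul_apply, Pi.sub_apply, smul_eq_mul, Pi.neg_apply]
    ring
  have hb' : b = q + (1 - κ) • (b - a) := by
    rw [hq]; ext i
    simp only [Pi.add_apply, Pi.smul_apply, Pi.sub_apply, smul_eq_mul]
    ring
  have hc' : c = q + (r - κ) • (b - a) := by
    rw [hc, hq]; ext i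
    simp only [Pi.add_apply, Pi.smul_apply, Pi.sub_apply, smul_eq_mul]
    ring
  have hd1 : (-κ) ≠ (1 - κ) := fun h => one_ne_zero (α := ℝ) (by linarith)
  have hd2 : (-κ) ≠ (r - κ) := fun h => hr0 (by linarith)
  have hd3 : (1 - κ) ≠ (r - κ) := fun h => hr1 (by linarith)
  obtain ⟨s, t, hsmem, htmem, hcase⟩ := two_same_side hd1 hd2 hd3
  have hpt : ∀ w : ℝ, (w = -κ ∨ w = 1 - κ ∨ w = r - κ) →
      (q + w • (b - a) = a ∨ q + w • (b - a) = b ∨ q + w • (b - a) = c) := by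
    intro w hw
    rcases hw with rfl | rfl | rfl
    · exact Or.inl ha'.symm
    · exact Or.inr (Or.inl hb'.symm)
    · exact Or.inr (Or.inr hc'.symm)
  have hgval : Ndet p a b / ip (b - a) (b - a) = ip e e := by
    rw [hNval, mul_comm, mul_div_assoc, div_self hU.ne', mul_one]
  rcases hcase with ⟨hs0, hst⟩ | ⟨hst, hs0⟩
  · obtain ⟨hNne, hlt⟩ := kelly_core q e (b - a) s t hU hXe hE hs0 hst
    rw [← hpe] at hNne hlt
    refine ⟨q + s • (b - a), q + t • (b - a), hpt s hsmem, hpt t htmem, hNne, ?_⟩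
    rw [hgval]
    exact hlt
  · have hU' : 0 < ip (-(b - a)) (-(b - a)) := by
      rw [ip_neg_left, ip_neg_right, neg_neg]; exact hU
    have hX' : ip e (-(b - a)) = 0 := by rw [ip_neg_right, hXe, neg_zero]
    obtain ⟨hNne, hlt⟩ := kelly_core q e (-(b - a)) (-s) (-t) hU' hX' hE
      (by linarith) (by linarith)
    have hrw1 : (-s) • (-(b - a)) = s • (b - a) := by rw [neg_smul, smul_neg, neg_neg]
    have hrw2 : (-t) • (-(b - a)) = t • (b - a) := by rw [neg_smul, smul_neg, neg_neg]
    rw [hrw1, hrw2, ← hpe] at hNne hlt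
    refine ⟨q + s • (b - a), q + t • (b - a), hpt s hsmem, hpt t htmem, hNne, ?_⟩
    rw [hgval]
    exact hlt



/-- **dual Sylvester–Gallai.** There is no finite set of points in
the real projective plane `ℙ²(ℝ)` — here represented by a finite set of nonzero,
pairwise non-proportional vectors of `ℝ³` — which is not all collinear (not contained
in the span of two vectors) and in which every line through two points of the set
contains at least a third point of the set. In particular no 12-point set realizing
the incidences of the points `P_9,…,P_12, P_17,…,P_20, P_21,…,P_24` of the Klein
configuration exists over `ℝ`. -/
theorem dual_sylvester_gallai :
    ¬ ∃ S : Finset (Fin 3 → ℝ),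
      (∀ v ∈ S, v ≠ 0) ∧
      (∀ v ∈ S, ∀ w ∈ S, v ≠ w → ∀ t : ℝ, v ≠ t • w) ∧
      (¬ ∃ a b : Fin 3 → ℝ, ∀ v ∈ S, v ∈ Submodule.span ℝ {a, b}) ∧
      (∀ v ∈ S, ∀ w ∈ S, v ≠ w →
        ∃ u ∈ S, u ≠ v ∧ u ≠ w ∧ u ∈ Submodule.span ℝ {v, w}) := by
  classical
  rintro ⟨S, hnz, hprop, hncol, hthird⟩
  obtain ⟨l, hl⟩ := exists_functional S hnz
  set φ : (Fin 3 → ℝ) → (Fin 3 → ℝ) := fun v => (ip l v)⁻¹ • v with hφ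
  set S' : Finset (Fin 3 → ℝ) := S.image φ with hS'
  -- basic facts
  have hvφ : ∀ v ∈ S, v = (ip l v) • φ v := by
    intro v hv
    rw [hφ]
    simp only
    rw [smul_inv_smul₀ (hl v hv)]
  have hone : ∀ x ∈ S', ip l x = 1 := by
    intro x hx
    obtain ⟨v, hv, rfl⟩ := Finset.mem_image.1 hx
    rw [hφ]
    simp only
    rw [ip_smul_right, inv_mul_cancel₀ (hl v hv)]
  have hφ_ne : ∀ v ∈ S, ∀ w ∈ S, v ≠ w → φ v ≠ φ w := by
    intro v hv w hw hvw heq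
    apply hprop v hv w hw hvw ((ip l v) * (ip l w)⁻¹)
    rw [mul_smul]
    calc v = (ip l v) • φ v := hvφ v hv
    _ = (ip l v) • φ w := by rw [heq]
    _ = (ip l v) • ((ip l w)⁻¹ • w) := rfl
  have hspan : ∀ v ∈ S, ∀ w ∈ S, Submodule.span ℝ {φ v, φ w} = Submodule.span ℝ {v, w} := by
    intro v hv w hw
    apply le_antisymm
    · rw [Submodule.span_le]
      rintro x hx
      rcases hx with rfl | hx
      · exact Submodule.smul_mem _ _ (Submodule.subset_span (Set.mem_insert _ _))
      · rcases hx with rfl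
        exact Submodule.smul_mem _ _
          (Submodule.subset_span (Set.mem_insert_of_mem _ rfl))
    · rw [Submodule.span_le]
      rintro x hx
      rcases hx with rfl | hx
      · have hm : (ip l x) • φ x ∈ Submodule.span ℝ {φ x, φ w} :=
          Submodule.smul_mem _ _ (Submodule.subset_span (Set.mem_insert _ _))
        rwa [← hvφ x hv] at hm
      · rcases hx with rfl
        have hm : (ip l x) • φ x ∈ Submodule.span ℝ {φ v, φ x} :=
          Submodule.smul_mem _ _
            (Submodule.subset_span (Set.mem_insert_of_mem _ rfl))
        rwa [← hvφ x hw] at hm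
  -- affine collinearity from span membership
  have haff : ∀ x y z : Fin 3 → ℝ, ip l x = 1 → ip l y = 1 → ip l z = 1 →
      z ∈ Submodule.span ℝ {x, y} → ∃ r : ℝ, z = x + r • (y - x) := by
    intro x y z hx hy hz hmem
    obtain ⟨α, β, hab⟩ := Submodule.mem_span_pair.1 hmem
    have hip : ip l (α • x + β • y) = α * ip l x + β * ip l y := by
      rw [ip_add_right, ip_smul_right, ip_smul_right]
    rw [hab, hz, hx, hy, mul_one, mul_one] at hip
    refine ⟨β, ?_⟩
    funext i
    have hco := congrFun hab i
    simp only [Pi.add_apply, Pi.smul_apply, Pi.sub_apply, smul_eq_mul] at hco ⊢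
    have : α = 1 - β := by linarith
    rw [this] at hco
    linarith [hco]
  -- nonemptiness of the set of non-collinear triples
  have hTne : ∃ x ∈ S', ∃ y ∈ S', ∃ z ∈ S', Ndet x y z ≠ 0 := by
    by_contra hcon
    push_neg at hcon
    apply hncol
    by_cases hpair : ∃ v ∈ S, ∃ w ∈ S, v ≠ w
    · obtain ⟨v, hv, w, hw, hvw⟩ := hpair
      refine ⟨v, w, ?_⟩
      intro u hu
      by_cases huv : u = v
      · exact huv ▸ Submodule.subset_span (Set.mem_insert _ _)
      by_cases huw : u = w
      · exact huw ▸ Submodule.subset_span (Set.mem_insert_of_mem _ rfl)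
      have hmu : φ u ∈ S' := Finset.mem_image_of_mem φ hu
      have hmv : φ v ∈ S' := Finset.mem_image_of_mem φ hv
      have hmw : φ w ∈ S' := Finset.mem_image_of_mem φ hw
      have hzero := hcon (φ u) hmu (φ v) hmv (φ w) hmw
      have hne : φ w - φ v ≠ 0 := sub_ne_zero.2 (Ne.symm (hφ_ne v hv w hw hvw))
      obtain ⟨r, hr⟩ := exists_smul_of_gram hne hzero
      have hm : φ u ∈ Submodule.span ℝ {φ v, φ w} := by
        rw [Submodule.mem_span_pair]
        refine ⟨1 - r, r, ?_⟩
        funext i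
        have hco := congrFun hr i
        simp only [Pi.add_apply, Pi.smul_apply, Pi.sub_apply, smul_eq_mul] at hco ⊢
        linarith [hco]
      rw [hspan v hv w hw] at hm
      have hm' : (ip l u) • φ u ∈ Submodule.span ℝ {v, w} := Submodule.smul_mem _ _ hm
      rwa [← hvφ u hu] at hm'
    · push_neg at hpair
      rcases S.eq_empty_or_nonempty with rfl | ⟨v, hv⟩
      · exact ⟨0, 0, by simp⟩
      · exact ⟨v, v, fun u hu => (hpair u hu v hv) ▸
          Submodule.subset_span (Set.mem_insert _ _)⟩
  -- minimization
  obtain ⟨x₀, hx₀, y₀, hy₀, z₀, hz₀, hN0⟩ := hTne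
  set T : Finset (((Fin 3 → ℝ) × (Fin 3 → ℝ)) × (Fin 3 → ℝ)) :=
    ((S' ×ˢ S') ×ˢ S').filter (fun t => Ndet t.1.1 t.1.2 t.2 ≠ 0) with hT
  have hTne' : T.Nonempty := by
    refine ⟨((x₀, y₀), z₀), ?_⟩
    rw [hT, Finset.mem_filter]
    exact ⟨Finset.mem_product.2 ⟨Finset.mem_product.2 ⟨hx₀, hy₀⟩, hz₀⟩, hN0⟩
  obtain ⟨m, hmT, hmin⟩ := T.exists_min_image
    (fun t => Ndet t.1.1 t.1.2 t.2 / ip (t.2 - t.1.2) (t.2 - t.1.2)) hTne'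
  obtain ⟨⟨p, a⟩, b⟩ := m
  dsimp only at hmin hmT
  rw [hT, Finset.mem_filter] at hmT
  obtain ⟨hmem, hNm⟩ := hmT
  rw [Finset.mem_product] at hmem
  obtain ⟨hmem', hbS⟩ := hmem
  rw [Finset.mem_product] at hmem'
  obtain ⟨hpS, haS⟩ := hmem'
  dsimp only at hpS haS hbS hNm
  have hab : a ≠ b := by
    rintro rfl
    apply hNm
    simp only [Ndet, sub_self]
    have : ip (0 : Fin 3 → ℝ) (0 : Fin 3 → ℝ) = 0 := by simp [ip]
    rw [this]
    have h2 : ip (0 : Fin 3 → ℝ) (p - a) = 0 := by simp [ip]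
    rw [h2]
    ring
  -- get original points and the third point
  obtain ⟨va, hva, hva'⟩ := Finset.mem_image.1 haS
  obtain ⟨wb, hwb, hwb'⟩ := Finset.mem_image.1 hbS
  have hvw : va ≠ wb := by
    rintro rfl
    exact hab (hva'.symm.trans hwb')
  obtain ⟨uc, hucS, hucv, hucw, hucspan⟩ := hthird va hva wb hwb hvw
  have hcS : φ uc ∈ S' := Finset.mem_image_of_mem φ hucS
  have hca : φ uc ≠ a := by rw [← hva']; exact hφ_ne uc hucS va hva hucv
  have hcb : φ uc ≠ b := by rw [← hwb']; exact hφ_ne uc hucS wb hwb hucw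
  have hcspan : φ uc ∈ Submodule.span ℝ {a, b} := by
    rw [← hva', ← hwb', hspan va hva wb hwb]
    show (ip l uc)⁻¹ • uc ∈ Submodule.span ℝ {va, wb}
    exact Submodule.smul_mem _ _ hucspan
  obtain ⟨r, hr⟩ := haff a b (φ uc) (hone a haS) (hone b hbS) (hone _ hcS) hcspan
  have hr0 : r ≠ 0 := by
    rintro rfl
    apply hca
    rw [hr]
    ext i; simp
  have hr1 : r ≠ 1 := by
    rintro rfl
    apply hcb
    rw [hr]
    ext i
    simp only [Pi.add_apply, Pi.smul_apply, Pi.sub_apply, smul_eq_mul, one_mul]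
    ring
  obtain ⟨A, B, hAmem, hBmem, hNAB, hlt⟩ := kelly_main p a b (φ uc) r hab hr hr0 hr1 hNm
  have hAS : A ∈ S' := by rcases hAmem with rfl | rfl | rfl <;> assumption
  have hBS : B ∈ S' := by rcases hBmem with rfl | rfl | rfl <;> assumption
  have hmemT : ((A, p), B) ∈ T := by
    rw [hT, Finset.mem_filter]
    exact ⟨Finset.mem_product.2 ⟨Finset.mem_product.2 ⟨hAS, hpS⟩, hBS⟩, hNAB⟩
  have := hmin ((A, p), B) hmemT
  simp only at this
  linarith [hlt, this]
end
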